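/- arXiv:1208.0398 — 2 statements merged into one kernel-verified Lean document; each statement's English description precedes it below -/
import Mathlib

section
/- Let G be a strongly connected tournament with |V(G)| ≥ 3 whose vertex set is partitioned into sets X, Y, Z such that X ∪ Y, Y ∪ Z, and Z ∪ X are each transitive. Write X = {x_1,...,x_ℓ}, Y = {y_1,...,y_m}, Z = {z_1,...,z_n} with x_i → x_j for i < j and similarly for Y and Z. Then there exists a sequence C_1, ..., C_{|V(G)|−2} of cyclic triangles with C_1 = {x_1, y_1, z_1}, and whenever C_r = {x_i, y_j, z_k} with r < |V(G)|−2, C_{r+1} equals {x_{i+1}, y_j, z_k}, {x_i, y_{j+1}, z_k}, or {x_i, y_j, z_{k+1}}. -/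
/-- A tournament: irreflexive, and between any two distinct vertices exactly one edge. -/
def IsTournament {V : Type*} (r : V → V → Prop) : Prop :=
  (∀ v, ¬ r v v) ∧ ∀ u v : V, u ≠ v → (r u v ↔ ¬ r v u)

/-- A homogeneous set. -/
def IsHomog {V : Type*} (r : V → V → Prop) (X : Set V) : Prop :=
  ∀ v ∉ X, (∀ x ∈ X, r v x) ∨ (∀ x ∈ X, r x v)

/-- A prime tournament: every homogeneous set is trivial. -/
def IsPrime {V : Type*} (r : V → V → Prop) : Prop :=
  ∀ X : Set V, IsHomog r X → X.Subsingleton ∨ X = Set.univ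

/-- A set of vertices is transitive: it induces no cyclic triangle. -/
def IsTransOn {V : Type*} (r : V → V → Prop) (X : Set V) : Prop :=
  ∀ a ∈ X, ∀ b ∈ X, ∀ c ∈ X, ¬ (r a b ∧ r b c ∧ r c a)

/-- {a,b,c} is a cyclic triangle (in one of the two cyclic orientations). -/
def Cyc3 {V : Type*} (r : V → V → Prop) (a b c : V) : Prop :=
  (r a b ∧ r b c ∧ r c a) ∨ (r a c ∧ r c b ∧ r b a)

/-!
In a strongly connected tournament, a set of vertices closed under out-edges and containing
one vertex contains all of them. Applied to the set of vertices dominated by every vertex of the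
prefixes `x_{≤ i}`, `y_{≤ j}`, `z_{≤ k}`, this gives the step: if `x_i → y_j → z_k → x_i` and
none of the three successor triples is cyclic, transitivity of the pairwise unions shows that every
vertex beyond the prefixes is dominated by all of them, so that set would be out-closed and
nonempty, yet it misses `x_i`. The same idea shows that `{x_1, y_1, z_1}` is cyclic (otherwise one
of them dominates everything) and that `X`, `Y`, `Z` are nonempty (otherwise the tournament would
be transitive). Since the index sum grows by one at each step, the sequence continues until it
reaches length `|V(G)| - 2`.
-/

open Set

section Tournament

variable {V : Type*} {r : V → V → Prop}

theorem forall_of_rel_closed (hconn : ∀ u v : V, Relation.ReflTransGen r u v) {p : V → Prop}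
    (hp : ∀ v w, r v w → p v → p w) {b : V} (hb : p b) (v : V) : p v := by
  induction hconn b v with
  | refl => exact hb
  | tail _ hvw ih => exact hp _ _ hvw ih

theorem IsTournament.asymm (hT : IsTournament r) {a b : V} (hab : r a b) (hba : r b a) :
    False := by
  rcases eq_or_ne a b with rfl | hne
  · exact hT.1 a hab
  · exact (hT.2 a b hne).1 hab hba

theorem IsTournament.rel_or_rel (hT : IsTournament r) {a b : V} (hne : a ≠ b) :
    r a b ∨ r b a := by
  by_contra! h
  exact h.1 ((hT.2 a b hne).2 h.2)

theorem IsTournament.not_forall_rel (hT : IsTournament r)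
    (hconn : ∀ u v : V, Relation.ReflTransGen r u v) {s v : V} (hv : v ≠ s) :
    ¬ ∀ w, w ≠ s → r s w := by
  intro hs
  refine hT.1 s (forall_of_rel_closed hconn (p := r s) (fun w u hwu hsw => ?_) (hs v hv) s)
  rcases eq_or_ne u s with rfl | hus
  · exact (hT.asymm hsw hwu).elim
  · exact hs u hus

theorem IsTournament.cyc3_of_not_dominates (hT : IsTournament r) {a b c : V} (hab : a ≠ b)
    (hbc : b ≠ c) (hca : c ≠ a) (ha : ¬ (r a b ∧ r a c)) (hb : ¬ (r b c ∧ r b a))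
    (hc : ¬ (r c a ∧ r c b)) : Cyc3 r a b c := by
  have := hT.rel_or_rel hab
  have := hT.rel_or_rel hbc
  have := hT.rel_or_rel hca
  unfold Cyc3
  tauto

theorem cyc3_rotate {a b c : V} : Cyc3 r a b c ↔ Cyc3 r b c a := by
  unfold Cyc3
  tauto

theorem Cyc3.swap {a b c : V} (h : Cyc3 r a b c) : Cyc3 r a c b :=
  h.symm

theorem IsTransOn.mono {S T : Set V} (hS : IsTransOn r S) (hTS : T ⊆ S) : IsTransOn r T :=
  fun a ha b hb c hc => hS a (hTS ha) b (hTS hb) c (hTS hc)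

theorem IsTransOn.trans {S : Set V} (hS : IsTransOn r S) (hT : IsTournament r) {a b c : V}
    (ha : a ∈ S) (hb : b ∈ S) (hc : c ∈ S) (hab : r a b) (hbc : r b c) : r a c := by
  have hne : a ≠ c := by
    rintro rfl
    exact hT.asymm hab hbc
  exact (hT.rel_or_rel hne).resolve_right fun hca => hS a ha b hb c hc ⟨hab, hbc, hca⟩

theorem IsTournament.subsingleton_of_isTransOn_univ (hT : IsTournament r)
    (hconn : ∀ u v : V, Relation.ReflTransGen r u v) (htr : IsTransOn r univ) :
    Subsingleton V := by
  refine ⟨fun u v => by_contra fun hne => ?_⟩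
  wlog huv : r u v generalizing u v
  · exact this v u (Ne.symm hne) ((hT.rel_or_rel hne).resolve_left huv)
  have hreach : ∀ w, w = v ∨ r v w :=
    forall_of_rel_closed hconn (fun w w' hww' => by
      rintro (rfl | hvw)
      · exact Or.inr hww'
      · exact Or.inr (htr.trans hT trivial trivial trivial hvw hww')) (Or.inl rfl)
  rcases hreach u with rfl | hvu
  · exact hne rfl
  · exact hT.asymm huv hvu

section Chain

variable {ι : Type*} [PartialOrder ι] {x : ι → V} {S : Set V}

theorem IsTransOn.rel_of_rel_of_le (hS : IsTransOn r S) (hT : IsTournament r)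
    (hx : ∀ i j, i < j → r (x i) (x j)) (hxS : range x ⊆ S) {v : V} (hv : v ∈ S) {i j : ι}
    (hvi : r v (x i)) (hij : i ≤ j) : r v (x j) := by
  rcases hij.eq_or_lt with rfl | hij
  · exact hvi
  · exact hS.trans hT hv (hxS (mem_range_self i)) (hxS (mem_range_self j)) hvi (hx i j hij)

theorem IsTransOn.rel_of_le_of_rel (hS : IsTransOn r S) (hT : IsTournament r)
    (hx : ∀ i j, i < j → r (x i) (x j)) (hxS : range x ⊆ S) {v : V} (hv : v ∈ S) {i j : ι}
    (hij : i ≤ j) (hjv : r (x j) v) : r (x i) v := by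
  rcases hij.eq_or_lt with rfl | hij
  · exact hjv
  · exact hS.trans hT (hxS (mem_range_self i)) (hxS (mem_range_self j)) hv (hx i j hij) hjv

end Chain

end Tournament

section ThreeChains

variable {V : Type*} {r : V → V → Prop} {ℓ m n : ℕ} {x : Fin ℓ → V} {y : Fin m → V}
  {z : Fin n → V}

theorem pos_of_isTransOn_union [Fintype V] (hT : IsTournament r)
    (hconn : ∀ u v : V, Relation.ReflTransGen r u v) (hcard : 2 ≤ Fintype.card V)
    (hcover : ∀ v, v ∈ range x ∨ v ∈ range y ∨ v ∈ range z)
    (hXY : IsTransOn r (range x ∪ range y)) : 0 < n := by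
  refine Nat.pos_of_ne_zero fun hn => ?_
  subst hn
  have hXY_univ : univ ⊆ range x ∪ range y := fun v _ =>
    (hcover v).imp_right fun h => h.resolve_right fun ⟨s, _⟩ => s.elim0
  have := hT.subsingleton_of_isTransOn_univ hconn (hXY.mono hXY_univ)
  have := Fintype.card_le_one_iff_subsingleton.2 this
  omega

theorem not_rel_zero_and_rel_zero (hT : IsTournament r)
    (hconn : ∀ u v : V, Relation.ReflTransGen r u v)
    (hcover : ∀ v, v ∈ range x ∨ v ∈ range y ∨ v ∈ range z)
    (hx : ∀ i j, i < j → r (x i) (x j)) (hy : ∀ i j, i < j → r (y i) (y j))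
    (hz : ∀ i j, i < j → r (z i) (z j))
    (hXY : IsTransOn r (range x ∪ range y)) (hZX : IsTransOn r (range z ∪ range x))
    (hℓ : 0 < ℓ) (hm : 0 < m) (hn : 0 < n) :
    ¬ (r (x ⟨0, hℓ⟩) (y ⟨0, hm⟩) ∧ r (x ⟨0, hℓ⟩) (z ⟨0, hn⟩)) := by
  rintro ⟨hxy, hxz⟩
  refine hT.not_forall_rel hconn (v := y ⟨0, hm⟩)
    (fun h => hT.1 _ (by rwa [h] at hxy)) fun w hw => ?_
  rcases hcover w with ⟨p, rfl⟩ | ⟨q, rfl⟩ | ⟨s, rfl⟩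
  · exact hx _ _ (lt_of_le_of_ne (Nat.zero_le p.val) fun h => hw (congrArg x h).symm)
  · exact hXY.rel_of_rel_of_le hT hy subset_union_right (subset_union_left (mem_range_self _))
      hxy (Nat.zero_le q.val)
  · exact hZX.rel_of_rel_of_le hT hz subset_union_left (subset_union_right (mem_range_self _))
      hxz (Nat.zero_le s.val)

theorem cyc3_zero (hT : IsTournament r) (hconn : ∀ u v : V, Relation.ReflTransGen r u v)
    (hinj : Function.Injective (Sum.elim x (Sum.elim y z)))
    (hcover : ∀ v, v ∈ range x ∨ v ∈ range y ∨ v ∈ range z)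
    (hx : ∀ i j, i < j → r (x i) (x j)) (hy : ∀ i j, i < j → r (y i) (y j))
    (hz : ∀ i j, i < j → r (z i) (z j))
    (hXY : IsTransOn r (range x ∪ range y)) (hYZ : IsTransOn r (range y ∪ range z))
    (hZX : IsTransOn r (range z ∪ range x)) (hℓ : 0 < ℓ) (hm : 0 < m) (hn : 0 < n) :
    Cyc3 r (x ⟨0, hℓ⟩) (y ⟨0, hm⟩) (z ⟨0, hn⟩) :=
  hT.cyc3_of_not_dominates (hinj.ne (a₁ := .inl _) (a₂ := .inr (.inl _)) Sum.inl_ne_inr)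
    (hinj.ne (a₁ := .inr (.inl _)) (a₂ := .inr (.inr _)) (by simp))
    (hinj.ne (a₁ := .inr (.inr _)) (a₂ := .inl _) Sum.inr_ne_inl)
    (not_rel_zero_and_rel_zero hT hconn hcover hx hy hz hXY hZX hℓ hm hn)
    (not_rel_zero_and_rel_zero hT hconn (fun v => (hcover v).rotate) hy hz hx hYZ hXY hm hn hℓ)
    (not_rel_zero_and_rel_zero hT hconn (fun v => (hcover v).rotate.rotate) hz hx hy hZX hYZ
      hn hℓ hm)

def DominatedByPrefixes (r : V → V → Prop) (x : Fin ℓ → V) (y : Fin m → V) (z : Fin n → V)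
    (i : Fin ℓ) (j : Fin m) (k : Fin n) (v : V) : Prop :=
  (∀ p ≤ i, r (x p) v) ∧ (∀ q ≤ j, r (y q) v) ∧ (∀ s ≤ k, r (z s) v)

theorem dominatedByPrefixes_rotate {i : Fin ℓ} {j : Fin m} {k : Fin n} {v : V} :
    DominatedByPrefixes r y z x j k i v ↔ DominatedByPrefixes r x y z i j k v :=
  ⟨fun ⟨hy, hz, hx⟩ => ⟨hx, hy, hz⟩, fun ⟨hx, hy, hz⟩ => ⟨hy, hz, hx⟩⟩

theorem dominatedByPrefixes_of_lt (hT : IsTournament r) (hx : ∀ i j, i < j → r (x i) (x j))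
    (hy : ∀ i j, i < j → r (y i) (y j)) (hz : ∀ i j, i < j → r (z i) (z j))
    (hXY : IsTransOn r (range x ∪ range y)) (hZX : IsTransOn r (range z ∪ range x))
    {i : Fin ℓ} {j : Fin m} {k : Fin n} (hyz : r (y j) (z k)) (hzx : r (z k) (x i))
    (hsucc : ∀ i' : Fin ℓ, i'.val = i.val + 1 → ¬ Cyc3 r (x i') (y j) (z k))
    {p : Fin ℓ} (hip : i < p) : DominatedByPrefixes r x y z i j k (x p) := by
  have hi : i.val + 1 < ℓ := by have := p.isLt; rw [Fin.lt_def] at hip; omega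
  set i' : Fin ℓ := ⟨i.val + 1, hi⟩
  have hii' : i < i' := Fin.lt_def.2 (Nat.lt_succ_self _)
  have hi'p : i' ≤ p := Fin.le_def.2 (Fin.lt_def.1 hip)
  have hzx' : r (z k) (x i') := hZX.trans hT (subset_union_left (mem_range_self k))
    (subset_union_right (mem_range_self i)) (subset_union_right (mem_range_self i')) hzx
    (hx i i' hii')
  have hyx' : r (y j) (x i') := by
    have hne : y j ≠ x i' := fun h => hT.asymm hyz (h ▸ hzx')
    exact (hT.rel_or_rel hne).resolve_right fun hxy => hsucc i' rfl (Or.inl ⟨hxy, hyz, hzx'⟩)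
  refine ⟨fun p' hp' => hx p' p (hp'.trans_lt hip), fun q hq => ?_, fun s hs => ?_⟩
  · exact hXY.rel_of_le_of_rel hT hy subset_union_right (subset_union_left (mem_range_self p)) hq
      (hXY.rel_of_rel_of_le hT hx subset_union_left (subset_union_right (mem_range_self j))
        hyx' hi'p)
  · exact hZX.rel_of_le_of_rel hT hz subset_union_left (subset_union_right (mem_range_self p)) hs
      (hZX.rel_of_rel_of_le hT hx subset_union_right (subset_union_left (mem_range_self k))
        hzx hip.le)

theorem exists_succ_cyc3 (hT : IsTournament r) (hconn : ∀ u v : V, Relation.ReflTransGen r u v)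
    (hcover : ∀ v, v ∈ range x ∨ v ∈ range y ∨ v ∈ range z)
    (hx : ∀ i j, i < j → r (x i) (x j)) (hy : ∀ i j, i < j → r (y i) (y j))
    (hz : ∀ i j, i < j → r (z i) (z j))
    (hXY : IsTransOn r (range x ∪ range y)) (hYZ : IsTransOn r (range y ∪ range z))
    (hZX : IsTransOn r (range z ∪ range x)) {i : Fin ℓ} {j : Fin m} {k : Fin n}
    (hxy : r (x i) (y j)) (hyz : r (y j) (z k)) (hzx : r (z k) (x i))
    (hlast : i.val + 1 < ℓ ∨ j.val + 1 < m ∨ k.val + 1 < n) :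
    (∃ i' : Fin ℓ, i'.val = i.val + 1 ∧ Cyc3 r (x i') (y j) (z k)) ∨
      (∃ j' : Fin m, j'.val = j.val + 1 ∧ Cyc3 r (x i) (y j') (z k)) ∨
      (∃ k' : Fin n, k'.val = k.val + 1 ∧ Cyc3 r (x i) (y j) (z k')) := by
  by_contra! h
  obtain ⟨hsx, hsy, hsz⟩ := h
  set D := DominatedByPrefixes r x y z i j k
  have hDx : ∀ p, i < p → D (x p) := fun p =>
    dominatedByPrefixes_of_lt hT hx hy hz hXY hZX hyz hzx hsx
  have hDy : ∀ q, j < q → D (y q) := fun q hq => dominatedByPrefixes_rotate.1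
    (dominatedByPrefixes_of_lt hT hy hz hx hYZ hXY hzx hxy
      (fun j' hj' h => hsy j' hj' (cyc3_rotate.2 h)) hq)
  have hDz : ∀ s, k < s → D (z s) := fun s hs => dominatedByPrefixes_rotate.2
    (dominatedByPrefixes_of_lt hT hz hx hy hZX hYZ hxy hyz
      (fun k' hk' h => hsz k' hk' (cyc3_rotate.1 h)) hs)
  have hclosed : ∀ v w, r v w → D v → D w := by
    intro v w hvw hv
    rcases hcover w with ⟨p, rfl⟩ | ⟨q, rfl⟩ | ⟨s, rfl⟩
    · exact (le_or_gt p i).elim (fun hp => (hT.asymm hvw (hv.1 p hp)).elim) (hDx p)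
    · exact (le_or_gt q j).elim (fun hq => (hT.asymm hvw (hv.2.1 q hq)).elim) (hDy q)
    · exact (le_or_gt s k).elim (fun hs => (hT.asymm hvw (hv.2.2 s hs)).elim) (hDz s)
  obtain ⟨b, hb⟩ : ∃ b, D b := by
    rcases hlast with h | h | h
    · exact ⟨_, hDx ⟨i.val + 1, h⟩ (Fin.lt_def.2 (Nat.lt_succ_self _))⟩
    · exact ⟨_, hDy ⟨j.val + 1, h⟩ (Fin.lt_def.2 (Nat.lt_succ_self _))⟩
    · exact ⟨_, hDz ⟨k.val + 1, h⟩ (Fin.lt_def.2 (Nat.lt_succ_self _))⟩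
  exact hT.1 (x i) ((forall_of_rel_closed hconn hclosed hb (x i)).1 i le_rfl)

def IsSuccTriple (a b : Fin ℓ × Fin m × Fin n) : Prop :=
  (b.1.val = a.1.val + 1 ∧ b.2.1 = a.2.1 ∧ b.2.2 = a.2.2) ∨
    (b.1 = a.1 ∧ b.2.1.val = a.2.1.val + 1 ∧ b.2.2 = a.2.2) ∨
    (b.1 = a.1 ∧ b.2.1 = a.2.1 ∧ b.2.2.val = a.2.2.val + 1)

theorem exists_isSuccTriple_cyc3 (hT : IsTournament r)
    (hconn : ∀ u v : V, Relation.ReflTransGen r u v)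
    (hcover : ∀ v, v ∈ range x ∨ v ∈ range y ∨ v ∈ range z)
    (hx : ∀ i j, i < j → r (x i) (x j)) (hy : ∀ i j, i < j → r (y i) (y j))
    (hz : ∀ i j, i < j → r (z i) (z j))
    (hXY : IsTransOn r (range x ∪ range y)) (hYZ : IsTransOn r (range y ∪ range z))
    (hZX : IsTransOn r (range z ∪ range x)) (a : Fin ℓ × Fin m × Fin n)
    (ha : Cyc3 r (x a.1) (y a.2.1) (z a.2.2))
    (hlast : a.1.val + a.2.1.val + a.2.2.val + 3 < ℓ + m + n) :
    ∃ b : Fin ℓ × Fin m × Fin n, Cyc3 r (x b.1) (y b.2.1) (z b.2.2) ∧ IsSuccTriple a b ∧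
      b.1.val + b.2.1.val + b.2.2.val = a.1.val + a.2.1.val + a.2.2.val + 1 := by
  obtain ⟨i, j, k⟩ := a
  dsimp only at ha hlast ⊢
  have hlast' : i.val + 1 < ℓ ∨ j.val + 1 < m ∨ k.val + 1 < n := by
    have := i.isLt; have := j.isLt; have := k.isLt
    omega
  rcases ha with ⟨hxy, hyz, hzx⟩ | ⟨hxz, hzy, hyx⟩
  · rcases exists_succ_cyc3 hT hconn hcover hx hy hz hXY hYZ hZX hxy hyz hzx hlast' with
      ⟨i', hi', h⟩ | ⟨j', hj', h⟩ | ⟨k', hk', h⟩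
    · exact ⟨(i', j, k), h, Or.inl ⟨hi', rfl, rfl⟩, by dsimp only; omega⟩
    · exact ⟨(i, j', k), h, Or.inr (Or.inl ⟨rfl, hj', rfl⟩), by dsimp only; omega⟩
    · exact ⟨(i, j, k'), h, Or.inr (Or.inr ⟨rfl, rfl, hk'⟩), by dsimp only; omega⟩
  · rcases exists_succ_cyc3 hT hconn (fun v => (hcover v).imp_right Or.symm) hx hz hy
      (by rwa [union_comm]) (by rwa [union_comm]) (by rwa [union_comm]) hxz hzy hyx
      (hlast'.imp_right Or.symm) with ⟨i', hi', h⟩ | ⟨k', hk', h⟩ | ⟨j', hj', h⟩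
    · exact ⟨(i', j, k), h.swap, Or.inl ⟨hi', rfl, rfl⟩, by dsimp only; omega⟩
    · exact ⟨(i, j, k'), h.swap, Or.inr (Or.inr ⟨rfl, rfl, hk'⟩), by dsimp only; omega⟩
    · exact ⟨(i, j', k), h.swap, Or.inr (Or.inl ⟨rfl, hj', rfl⟩), by dsimp only; omega⟩

end ThreeChains

theorem exists_seq_of_forall_exists {α : Type*} (P : ℕ → α → Prop) (R : α → α → Prop)
    {N : ℕ} {a₀ : α} (h₀ : P 0 a₀)
    (hstep : ∀ t a, t + 1 < N → P t a → ∃ b, P (t + 1) b ∧ R a b) :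
    ∃ C : ℕ → α, C 0 = a₀ ∧ (∀ t < N, P t (C t)) ∧ ∀ t, t + 1 < N → R (C t) (C (t + 1)) := by
  choose! f hfP hfR using hstep
  let C : ℕ → α := fun t => Nat.rec (motive := fun _ => α) a₀ f t
  have hC : ∀ t < N, P t (C t) := by
    intro t ht
    induction t with
    | zero => exact h₀
    | succ t ih => exact hfP t (C t) ht (ih (by omega))
  exact ⟨C, rfl, hC, fun t ht => hfR t (C t) ht (hC t (by omega))⟩

/-- Sequence of cyclic triangles in a strongly connected tournament partitioned
into three pairwise-transitive sets. -/
theorem triangle_sequence {V : Type*} [Fintype V] (r : V → V → Prop)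
    (hT : IsTournament r)
    (hconn : ∀ u v : V, Relation.ReflTransGen r u v)
    (hcard : 3 ≤ Fintype.card V)
    {ℓ m n : ℕ} (x : Fin ℓ → V) (y : Fin m → V) (z : Fin n → V)
    (hbij : Function.Bijective (Sum.elim x (Sum.elim y z)))
    (hx : ∀ i j : Fin ℓ, i < j → r (x i) (x j))
    (hy : ∀ i j : Fin m, i < j → r (y i) (y j))
    (hz : ∀ i j : Fin n, i < j → r (z i) (z j))
    (hXY : IsTransOn r (Set.range x ∪ Set.range y))
    (hYZ : IsTransOn r (Set.range y ∪ Set.range z))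
    (hZX : IsTransOn r (Set.range z ∪ Set.range x)) :
    ∃ C : Fin (Fintype.card V - 2) → Fin ℓ × Fin m × Fin n,
      ((C ⟨0, by omega⟩).1.val = 0 ∧ (C ⟨0, by omega⟩).2.1.val = 0 ∧
        (C ⟨0, by omega⟩).2.2.val = 0) ∧
      (∀ t, Cyc3 r (x (C t).1) (y (C t).2.1) (z (C t).2.2)) ∧
      (∀ t : ℕ, ∀ h : t + 1 < Fintype.card V - 2,
        ((C ⟨t + 1, h⟩).1.val = (C ⟨t, by omega⟩).1.val + 1 ∧
          (C ⟨t + 1, h⟩).2.1 = (C ⟨t, by omega⟩).2.1 ∧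
          (C ⟨t + 1, h⟩).2.2 = (C ⟨t, by omega⟩).2.2) ∨
        ((C ⟨t + 1, h⟩).1 = (C ⟨t, by omega⟩).1 ∧
          (C ⟨t + 1, h⟩).2.1.val = (C ⟨t, by omega⟩).2.1.val + 1 ∧
          (C ⟨t + 1, h⟩).2.2 = (C ⟨t, by omega⟩).2.2) ∨
        ((C ⟨t + 1, h⟩).1 = (C ⟨t, by omega⟩).1 ∧
          (C ⟨t + 1, h⟩).2.1 = (C ⟨t, by omega⟩).2.1 ∧
          (C ⟨t + 1, h⟩).2.2.val = (C ⟨t, by omega⟩).2.2.val + 1)) := by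
  have hcover : ∀ v, v ∈ range x ∨ v ∈ range y ∨ v ∈ range z := fun v => by
    obtain ⟨u | u | u, rfl⟩ := hbij.2 v <;> simp
  have hsize : ℓ + (m + n) = Fintype.card V := by
    simpa using Fintype.card_of_bijective hbij
  have hn := pos_of_isTransOn_union hT hconn (by omega) hcover hXY
  have hℓ := pos_of_isTransOn_union hT hconn (by omega) (fun v => (hcover v).rotate) hYZ
  have hm := pos_of_isTransOn_union hT hconn (by omega) (fun v => (hcover v).rotate.rotate) hZX
  obtain ⟨C, hC0, hCcyc, hCsucc⟩ := exists_seq_of_forall_exists (N := Fintype.card V - 2)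
    (fun t a => Cyc3 r (x a.1) (y a.2.1) (z a.2.2) ∧ a.1.val + a.2.1.val + a.2.2.val = t)
    IsSuccTriple (a₀ := (⟨0, hℓ⟩, ⟨0, hm⟩, ⟨0, hn⟩))
    ⟨cyc3_zero hT hconn hbij.1 hcover hx hy hz hXY hYZ hZX hℓ hm hn, rfl⟩
    fun t a ht ⟨ha, hsum⟩ => by
      obtain ⟨b, hb, hab, hsum'⟩ :=
        exists_isSuccTriple_cyc3 hT hconn hcover hx hy hz hXY hYZ hZX a ha (by omega)
      exact ⟨b, ⟨hb, by omega⟩, hab⟩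
  exact ⟨fun t => C t, by simp [hC0], fun t => (hCcyc t t.isLt).1, hCsucc⟩
end

section
/- Let G be a tournament that is both T_5-free and U_5-free, let v ∈ V(G), and suppose {x, y, z} and {x′, y, z} are cyclic triangles in V(G)\{v} with x ≠ x′ and x → x′. If y → z, y is a predecessor of v, and z is a successor of v, then x and x′ are either both predecessors of v or both successors of v. -/
/-- T_5: vertices 0,...,4 (v_k = k-1), with i → j iff j - i ≡ 1 or 2 (mod 5). -/
def T5 (i j : Fin 5) : Prop :=
  (j.val + 5 - i.val) % 5 = 1 ∨ (j.val + 5 - i.val) % 5 = 2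

/-- U_5: obtained from T_5 by reversing the edge between v_1 and v_2
(indices 0 and 1), so that v_2 → v_1. -/
def U5 (i j : Fin 5) : Prop :=
  if i = 0 ∧ j = 1 then False else if i = 1 ∧ j = 0 then True else T5 i j

/-- G (given by relation r) contains a copy of the tournament given by s. -/
def Copy {V W : Type*} (r : V → V → Prop) (s : W → W → Prop) : Prop :=
  ∃ f : W → V, Function.Injective f ∧ ∀ a b, s a b → r (f a) (f b)

/- Since y → z, both cyclic triangles are oriented x → y → z → x and x' → y → z → x'.
If v → x and x' → v, then x, x', y, v, z span a T_5; if x → v and v → x', then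
x', x, y, v, z span a U_5. As G has no loops, any map from a tournament into G that
preserves edges is injective, so exhibiting the ten edges suffices. -/

namespace IsTournament

variable {V : Type*} {r : V → V → Prop}

theorem ne_of_rel (hT : IsTournament r) {a b : V} (h : r a b) : a ≠ b :=
  fun hab => hT.1 a (hab ▸ h)

theorem asymm_s13 (hT : IsTournament r) {a b : V} (h : r a b) : ¬ r b a :=
  (hT.2 a b (hT.ne_of_rel h)).mp h

theorem rel_or_rel_s13 (hT : IsTournament r) {a b : V} (hab : a ≠ b) : r a b ∨ r b a :=
  or_iff_not_imp_right.mpr (hT.2 a b hab).mpr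

end IsTournament

theorem Cyc3.rel_of_rel {V : Type*} {r : V → V → Prop} (hT : IsTournament r) {a b c : V}
    (h : Cyc3 r a b c) (hbc : r b c) : r a b ∧ r c a := by
  rcases h with ⟨hab, -, hca⟩ | ⟨-, hcb, -⟩
  · exact ⟨hab, hca⟩
  · exact absurd hcb (hT.asymm_s13 hbc)

theorem injective_of_map_rel {V W : Type*} {r : V → V → Prop} {s : W → W → Prop}
    (hr : ∀ v, ¬ r v v) (hs : ∀ a b, a ≠ b → s a b ∨ s b a) {f : W → V}
    (hf : ∀ a b, s a b → r (f a) (f b)) : Function.Injective f := by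
  intro a b hfab
  by_contra hab
  rcases hs a b hab with h | h
  · exact hr (f b) (hfab ▸ hf a b h)
  · exact hr (f b) (hfab ▸ hf b a h)

theorem copy_of_map_rel {V W : Type*} {r : V → V → Prop} {s : W → W → Prop}
    (hr : ∀ v, ¬ r v v) (hs : ∀ a b, a ≠ b → s a b ∨ s b a) (f : W → V)
    (hf : ∀ a b, s a b → r (f a) (f b)) : Copy r s :=
  ⟨f, injective_of_map_rel hr hs hf, hf⟩

section FiveVertices

variable {V : Type*} {r : V → V → Prop} {a₀ a₁ a₂ a₃ a₄ : V}

theorem copy_T5_of_rel (hr : ∀ v, ¬ r v v)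
    (h01 : r a₀ a₁) (h12 : r a₁ a₂) (h23 : r a₂ a₃) (h34 : r a₃ a₄) (h40 : r a₄ a₀)
    (h02 : r a₀ a₂) (h13 : r a₁ a₃) (h24 : r a₂ a₄) (h30 : r a₃ a₀) (h41 : r a₄ a₁) :
    Copy r T5 := by
  refine copy_of_map_rel hr (by unfold T5; decide) ![a₀, a₁, a₂, a₃, a₄] fun i j hij => ?_
  fin_cases i <;> fin_cases j <;> simp_all [T5]

theorem copy_U5_of_rel (hr : ∀ v, ¬ r v v)
    (h10 : r a₁ a₀) (h12 : r a₁ a₂) (h23 : r a₂ a₃) (h34 : r a₃ a₄) (h40 : r a₄ a₀)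
    (h02 : r a₀ a₂) (h13 : r a₁ a₃) (h24 : r a₂ a₄) (h30 : r a₃ a₀) (h41 : r a₄ a₁) :
    Copy r U5 := by
  refine copy_of_map_rel hr (by unfold U5 T5; decide) ![a₀, a₁, a₂, a₃, a₄] fun i j hij => ?_
  fin_cases i <;> fin_cases j <;> simp_all [U5, T5]

end FiveVertices

theorem both_sides_general {V : Type*} (r : V → V → Prop)
    (hT : IsTournament r) (hT5 : ¬ Copy r T5) (hU5 : ¬ Copy r U5)
    (v x x' y z : V)
    (hc1 : Cyc3 r x y z) (hc2 : Cyc3 r x' y z)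
    (hxe : r x x') (hyz : r y z) (hypred : r y v) (hzsucc : r v z) :
    (r x v ∧ r x' v) ∨ (r v x ∧ r v x') := by
  obtain ⟨hxy, hzx⟩ := hc1.rel_of_rel hT hyz
  obtain ⟨hx'y, hzx'⟩ := hc2.rel_of_rel hT hyz
  have hxv : x ≠ v := fun h => hT.asymm_s13 hypred (h ▸ hxy)
  have hx'v : x' ≠ v := fun h => hT.asymm_s13 hypred (h ▸ hx'y)
  rcases hT.rel_or_rel_s13 hxv with hxv | hvx <;> rcases hT.rel_or_rel_s13 hx'v with hx'v | hvx'
  · exact Or.inl ⟨hxv, hx'v⟩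
  · exact absurd (copy_U5_of_rel hT.1 hxe hxy hypred hzsucc hzx' hx'y hxv hyz hvx' hzx) hU5
  · exact absurd (copy_T5_of_rel hT.1 hxe hx'y hypred hzsucc hzx hxy hx'v hyz hvx hzx') hT5
  · exact Or.inr ⟨hvx, hvx'⟩

/-- Proposition (e): with cyclic triangles {x,y,z} and {x',y,z}, x → x',
y → z, y a predecessor of v and z a successor of v, the vertices x and x'
are both predecessors or both successors of v. -/
theorem both_sides {V : Type*} (r : V → V → Prop)
    (hT : IsTournament r) (hT5 : ¬ Copy r T5) (hU5 : ¬ Copy r U5)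
    (v x x' y z : V)
    (hxv : x ≠ v) (hx'v : x' ≠ v) (hyv : y ≠ v) (hzv : z ≠ v) (hxx' : x ≠ x')
    (hc1 : Cyc3 r x y z) (hc2 : Cyc3 r x' y z)
    (hxe : r x x') (hyz : r y z) (hypred : r y v) (hzsucc : r v z) :
    (r x v ∧ r x' v) ∨ (r v x ∧ r v x') :=
  both_sides_general r hT hT5 hU5 v x x' y z hc1 hc2 hxe hyz hypred hzsucc
end
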